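/- arXiv:0911.4191 — 2 statements merged into one kernel-verified Lean document; each statement's English description precedes it below -/
import Mathlib

section
/- The Graver basis of an integer matrix A is finite. -/
/-!
Split a vector `x ∈ ℤⁿ` into its positive and negative parts `(x⁺, x⁻) ∈ ℕⁿ × ℕⁿ`. This
encoding is injective, and `x⁺ ≤ y⁺`, `x⁻ ≤ y⁻` coordinatewise force `x ⊑ y`. The Graver
basis is an antichain for `⊑`, so its image is an antichain of `ℕⁿ × ℕⁿ`, which is finite
by Dickson's lemma.
-/

/-- The conformal partial order on ℤⁿ. -/
def IsConformal {n : ℕ} (x y : Fin n → ℤ) : Prop :=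
  ∀ i, x i * y i ≥ 0 ∧ |x i| ≤ |y i|

/-- The Graver basis of an integer matrix. -/
def Graver {m n : ℕ} (A : Matrix (Fin m) (Fin n) ℤ) : Set (Fin n → ℤ) :=
  {x | x ≠ 0 ∧ A.mulVec x = 0 ∧
    ∀ y : Fin n → ℤ, y ≠ 0 → A.mulVec y = 0 → IsConformal y x → y = x}

def posNegParts {ι : Type*} (x : ι → ℤ) : (ι → ℕ) × (ι → ℕ) :=
  (fun i => (x i).toNat, fun i => (-x i).toNat)

lemma posNegParts_injective {ι : Type*} : Function.Injective (posNegParts (ι := ι)) := by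
  intro x y h
  funext i
  have hpos := congrFun (congrArg Prod.fst h) i
  have hneg := congrFun (congrArg Prod.snd h) i
  simp only [posNegParts] at hpos hneg
  omega

lemma Int.mul_nonneg_and_abs_le_of_toNat_le {a b : ℤ} (hpos : a.toNat ≤ b.toNat)
    (hneg : (-a).toNat ≤ (-b).toNat) : a * b ≥ 0 ∧ |a| ≤ |b| := by
  obtain ⟨ha, hab⟩ | ⟨hba, ha⟩ : (0 ≤ a ∧ a ≤ b) ∨ (b ≤ a ∧ a ≤ 0) := by omega
  · exact ⟨by nlinarith, abs_le_abs_of_nonneg ha hab⟩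
  · exact ⟨by nlinarith, abs_le_abs_of_nonpos ha hba⟩

lemma isConformal_of_posNegParts_le {n : ℕ} {x y : Fin n → ℤ}
    (h : posNegParts x ≤ posNegParts y) : IsConformal x y :=
  fun i => Int.mul_nonneg_and_abs_le_of_toNat_le (h.1 i) (h.2 i)

lemma Set.Finite.of_isAntichain_isConformal {n : ℕ} {s : Set (Fin n → ℤ)}
    (hs : IsAntichain IsConformal s) : s.Finite := by
  have hparts : IsAntichain (· ≤ ·) (posNegParts '' s) :=
    hs.image posNegParts fun _ _ => isConformal_of_posNegParts_le
  exact (hparts.finite_of_partiallyWellOrderedOn (Set.isPWO_of_wellQuasiOrderedLE _))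
    |>.of_finite_image posNegParts_injective.injOn

lemma graver_isAntichain {m n : ℕ} (A : Matrix (Fin m) (Fin n) ℤ) :
    IsAntichain IsConformal (Graver A) :=
  fun _ hx _ hy hne hxy => hne (hy.2.2 _ hx.1 hx.2.1 hxy)

/-- The Graver basis of an integer matrix is finite. -/
theorem graver_finite (m n : ℕ) (A : Matrix (Fin m) (Fin n) ℤ) :
    (Graver A).Finite :=
  .of_isAntichain_isConformal (graver_isAntichain A)
end

section
/- Let A be an integer m×n matrix, l, u ∈ (ℤ ∪ {±∞})ⁿ, b ∈ ℤᵐ, and suppose the set S = {x ∈ ℤⁿ : Ax = b, l ≤ x ≤ u} is infinite. Then there exists g ∈ G(A) with gᵢ ≤ 0 whenever uᵢ < ∞ and gᵢ ≥ 0 whenever lᵢ > −∞. -/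
theorem Int.natAbs_lt_natAbs_of_mul_nonneg {a b : ℤ} (hab : 0 ≤ a * b) (hle : |a| ≤ |b|)
    (hne : a ≠ b) : a.natAbs < b.natAbs := by
  rw [← Int.ofNat_lt, Int.natCast_natAbs, Int.natCast_natAbs]
  refine hle.lt_of_ne fun habs => hne ?_
  rcases abs_eq_abs.mp habs with rfl | rfl
  · rfl
  · have hb : b * b = 0 := le_antisymm (by linarith) (mul_self_nonneg b)
    rw [mul_self_eq_zero.mp hb, neg_zero]

theorem Set.Infinite.exists_ne_map_le {α β : Type*} [Preorder β]
    [WellQuasiOrderedLE β] {s : Set α} (hs : s.Infinite) (f : α → β) :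
    ∃ x ∈ s, ∃ y ∈ s, x ≠ y ∧ f x ≤ f y := by
  let e := hs.natEmbedding s
  obtain ⟨j, k, hjk, hle⟩ := wellQuasiOrdered_le fun t => f (e t)
  exact ⟨e j, (e j).2, e k, (e k).2, fun h => hjk.ne (e.injective (Subtype.ext h)), hle⟩

theorem EReal.ceil_toReal_le {l : EReal} {k : ℤ} (hl : ⊥ < l) (h : l ≤ ((k : ℝ) : EReal)) :
    ⌈l.toReal⌉ ≤ k :=
  Int.ceil_le.mpr (by simpa using EReal.toReal_le_toReal h hl.ne' (EReal.coe_ne_top _))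

theorem EReal.le_floor_toReal {u : EReal} {k : ℤ} (hu : u < ⊤) (h : ((k : ℝ) : EReal) ≤ u) :
    k ≤ ⌊u.toReal⌋ :=
  Int.le_floor.mpr (by simpa using EReal.toReal_le_toReal h (EReal.coe_ne_bot _) hu.ne)

namespace IsConformal

variable {n : ℕ}

theorem refl (x : Fin n → ℤ) : IsConformal x x :=
  fun _ => ⟨mul_self_nonneg _, le_rfl⟩

theorem trans {x y z : Fin n → ℤ} (hxy : IsConformal x y) (hyz : IsConformal y z) :
    IsConformal x z := by
  intro i
  obtain ⟨hxy_sign, hxy_abs⟩ := hxy i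
  obtain ⟨hyz_sign, hyz_abs⟩ := hyz i
  refine ⟨?_, hxy_abs.trans hyz_abs⟩
  rcases eq_or_ne (y i) 0 with hy | hy
  · rw [hy, abs_zero, abs_nonpos_iff] at hxy_abs
    simp [hxy_abs]
  · -- `(x y) (y z) = (x z) y²` with `y² > 0`
    nlinarith [mul_nonneg hxy_sign hyz_sign, mul_self_pos.mpr hy]

theorem sum_natAbs_lt {x y : Fin n → ℤ} (h : IsConformal x y) (hne : x ≠ y) :
    ∑ i, (x i).natAbs < ∑ i, (y i).natAbs := by
  obtain ⟨i, hi⟩ := Function.ne_iff.mp hne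
  refine Finset.sum_lt_sum (fun j _ => ?_) ⟨i, Finset.mem_univ i,
    Int.natAbs_lt_natAbs_of_mul_nonneg (h i).1 (h i).2 hi⟩
  rw [← Int.ofNat_le, Int.natCast_natAbs, Int.natCast_natAbs]
  exact (h j).2

theorem wellFounded_strict : WellFounded fun x y : Fin n → ℤ => IsConformal x y ∧ x ≠ y :=
  Subrelation.wf (fun h => sum_natAbs_lt h.1 h.2)
    (measure fun x : Fin n → ℤ => ∑ i, (x i).natAbs).wf

theorem nonpos {g z : Fin n → ℤ} (h : IsConformal g z) {i : Fin n} (hz : z i ≤ 0) :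
    g i ≤ 0 := by
  obtain ⟨hsign, habs⟩ := h i
  rcases hz.lt_or_eq with hz | hz
  · exact nonpos_of_mul_nonneg_left hsign hz
  · rw [hz, abs_zero, abs_nonpos_iff] at habs
    exact habs.le

theorem nonneg {g z : Fin n → ℤ} (h : IsConformal g z) {i : Fin n} (hz : 0 ≤ z i) :
    0 ≤ g i := by
  obtain ⟨hsign, habs⟩ := h i
  rcases hz.lt_or_eq with hz | hz
  · exact nonneg_of_mul_nonneg_left hsign hz
  · rw [← hz, abs_zero, abs_nonpos_iff] at habs
    exact habs.ge

end IsConformal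

theorem exists_mem_graver_isConformal {m n : ℕ} (A : Matrix (Fin m) (Fin n) ℤ)
    {z : Fin n → ℤ} (hz : z ≠ 0) (hAz : A.mulVec z = 0) :
    ∃ g ∈ Graver A, IsConformal g z := by
  obtain ⟨g, ⟨hg, hAg, hgz⟩, hmin⟩ := IsConformal.wellFounded_strict.has_min
    {y | y ≠ 0 ∧ A.mulVec y = 0 ∧ IsConformal y z} ⟨z, hz, hAz, IsConformal.refl z⟩
  refine ⟨g, ⟨hg, hAg, fun y hy hAy hyg => ?_⟩, hgz⟩
  by_contra hne
  exact hmin y ⟨hy, hAy, hyg.trans hgz⟩ ⟨hyg, hne⟩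

/-- At an infinite bound `toReal` returns `0`, so the corresponding component is junk; only
the components at finite bounds are used. -/
noncomputable def boxSlack {ι : Type*} (l u : ι → EReal) (x : ι → ℤ) : ι → ℕ × ℕ :=
  fun i => ((x i - ⌈(l i).toReal⌉).toNat, (⌊(u i).toReal⌋ - x i).toNat)

section boxSlack

variable {ι : Type*} {l u : ι → EReal} {x y : ι → ℤ} {i : ι}

theorem le_of_boxSlack_le_of_bot_lt (hx : l i ≤ ((x i : ℝ) : EReal))
    (hy : l i ≤ ((y i : ℝ) : EReal)) (hl : ⊥ < l i)
    (h : boxSlack l u x ≤ boxSlack l u y) : x i ≤ y i := by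
  have hxl := EReal.ceil_toReal_le hl hx
  have hyl := EReal.ceil_toReal_le hl hy
  have hslack := (h i).1
  simp only [boxSlack] at hslack
  omega

theorem le_of_boxSlack_le_of_lt_top (hx : ((x i : ℝ) : EReal) ≤ u i)
    (hy : ((y i : ℝ) : EReal) ≤ u i) (hu : u i < ⊤)
    (h : boxSlack l u x ≤ boxSlack l u y) : y i ≤ x i := by
  have hxu := EReal.le_floor_toReal hu hx
  have hyu := EReal.le_floor_toReal hu hy
  have hslack := (h i).2
  simp only [boxSlack] at hslack
  omega

end boxSlack

/-- If the feasible set is infinite, then some Graver basis element is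
compatible with the bounds. -/
theorem graver_recession_of_infinite (m n : ℕ)
    (A : Matrix (Fin m) (Fin n) ℤ) (b : Fin m → ℤ) (l u : Fin n → EReal)
    (hinf : {x : Fin n → ℤ | A.mulVec x = b ∧
        ∀ i, l i ≤ ((x i : ℝ) : EReal) ∧ ((x i : ℝ) : EReal) ≤ u i}.Infinite) :
    ∃ g ∈ Graver A, (∀ i, u i < ⊤ → g i ≤ 0) ∧ (∀ i, ⊥ < l i → g i ≥ 0) := by
  obtain ⟨x, ⟨hAx, hx⟩, y, ⟨hAy, hy⟩, hxy, hslack⟩ :=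
    hinf.exists_ne_map_le (boxSlack l u)
  have hAz : A.mulVec (y - x) = 0 := by rw [Matrix.mulVec_sub, hAx, hAy, sub_self]
  obtain ⟨g, hg, hgz⟩ := exists_mem_graver_isConformal A (sub_ne_zero.mpr hxy.symm) hAz
  refine ⟨g, hg, fun i hu => hgz.nonpos ?_, fun i hl => hgz.nonneg ?_⟩
  · exact sub_nonpos.mpr (le_of_boxSlack_le_of_lt_top (hx i).2 (hy i).2 hu hslack)
  · exact sub_nonneg.mpr (le_of_boxSlack_le_of_bot_lt (hx i).1 (hy i).1 hl hslack)
end
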